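/- arXiv:2301.09171 — 3 statements merged into one kernel-verified Lean document; each statement's English description precedes it below -/
import Mathlib

section
/- Let V be an even vector space of dimension d over a field F of characteristic ≠ 2, let 1 < n < d, and let R be a commutative unital F-algebra. If φ ∈ GL(V ⊗ R) satisfies φ^{∧n} = id on ⋀ⁿ(V ⊗ R), then φ = r·id for some r ∈ R^× with rⁿ = 1. Hence the kernel of the natural map GL(V) → GL(⋀ⁿV) is the group scheme μₙ of n-th roots of unity. -/
/-!
For `v : M` and `w : Fin (n - 1) → M` we have `φ v ∧ v ∧ w = φ v ∧ φ v ∧ φ w = 0`. Pairing this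
with the minor of a basis `b` at the indices `(i, j, τ)`, where `v = b j`, `w = b ∘ τ` and
`i ∉ {j} ∪ range τ`, reads off the `i`-th coordinate of `φ (b j)`; so `φ` is diagonal,
`φ (b j) = a j • b j`. Then `∧ⁿφ = id` on `b σ₁ ∧ ⋯ ∧ b σₙ` gives `∏ q, a (σ q) = 1` for every
injective `σ`, and comparing two such products that differ in one index (possible as `n < d`)
shows that all `a j` agree. Their common value `r` satisfies `rⁿ = 1`.
-/

open Function exteriorPower

theorem Finset.exists_embedding_fin_forall_notMem {ι : Type*} [Fintype ι] (s : Finset ι)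
    {k : ℕ} (h : k + s.card ≤ Fintype.card ι) : ∃ τ : Fin k ↪ ι, ∀ q, τ q ∉ s := by
  classical
  obtain ⟨e⟩ := Embedding.nonempty_of_card_le (α := Fin k) (β := {x // x ∉ s})
    (by simp [Fintype.card_subtype_compl]; omega)
  exact ⟨e.trans (Embedding.subtype _), fun q => (e q).2⟩

namespace exteriorPower

variable {R M : Type*} [CommRing R] [AddCommGroup M] [Module R M] {φ : M →ₗ[R] M}

theorem ιMulti_comp_of_map_eq_id {n : ℕ} (hφ : map n φ = LinearMap.id) (v : Fin n → M) :
    ιMulti R n (φ ∘ v) = ιMulti R n v := by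
  rw [← map_apply_ιMulti, hφ, LinearMap.id_apply]

theorem ιMulti_cons_apply_cons_eq_zero {m : ℕ} (hφ : map (m + 1) φ = LinearMap.id) (v : M)
    (w : Fin m → M) : ιMulti R (m + 2) (Fin.cons (φ v) (Fin.cons v w)) = 0 := by
  have hvw := congrArg Subtype.val (ιMulti_comp_of_map_eq_id hφ (Fin.cons v w))
  rw [ιMulti_apply_coe, ιMulti_apply_coe] at hvw
  rw [← Submodule.coe_eq_zero, ιMulti_apply_coe, ExteriorAlgebra.ιMulti_succ_apply,
    Fin.cons_zero]
  change _ * ExteriorAlgebra.ιMulti R (m + 1) (Fin.cons v w) = 0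
  rw [← hvw, ExteriorAlgebra.ιMulti_succ_apply, comp_apply, Fin.cons_zero, ← mul_assoc,
    ExteriorAlgebra.ι_sq_zero, zero_mul]

end exteriorPower

namespace Module.Basis

variable {R M ι : Type*} [CommRing R] [AddCommGroup M] [Module R M]

theorem of_coord_comp_eq_one (b : Basis ι R M) {n : ℕ} {σ : Fin n → ι}
    (hσ : Function.Injective σ) : Matrix.of (fun q p => b.coord (σ p) (b (σ q))) = 1 := by
  classical
  ext q p
  simp [Matrix.one_apply, Finsupp.single_apply, hσ.eq_iff]

theorem eq_one_of_smul_ιMulti_comp_eq (b : Basis ι R M) {n : ℕ} {σ : Fin n → ι}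
    (hσ : Function.Injective σ) {c : R} (h : c • ιMulti R n (b ∘ σ) = ιMulti R n (b ∘ σ)) :
    c = 1 := by
  have := congrArg (pairingDual R M n (ιMulti R n (b.coord ∘ σ))) h
  simpa only [map_smul, pairingDual_ιMulti_ιMulti, comp_apply, b.of_coord_comp_eq_one hσ,
    Matrix.det_one, smul_eq_mul, mul_one] using this

theorem coord_eq_zero_of_ιMulti_cons_eq_zero (b : Basis ι R M) {m : ℕ} {x : M} {i : ι}
    {τ : Fin m → ι} (hτ : Function.Injective τ) (hi : ∀ q, τ q ≠ i)
    (h : ιMulti R (m + 1) (Fin.cons x (b ∘ τ)) = 0) : b.coord i x = 0 := by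
  have hcol : ∀ q, b.coord i (b (τ q)) = 0 := fun q => by
    rw [b.coord_apply, b.repr_self, Finsupp.single_eq_of_ne (hi q).symm]
  -- Expand the minor along the column `i`, which vanishes below its first entry.
  have := congrArg (pairingDual R M (m + 1) (ιMulti R (m + 1) (b.coord ∘ Fin.cons i τ))) h
  rw [pairingDual_ιMulti_ιMulti, map_zero, Matrix.det_succ_column_zero, Fin.sum_univ_succ] at this
  simp only [Matrix.submatrix, Fin.succAbove_zero, Matrix.of_apply, comp_apply, Fin.cons_succ,
    Fin.cons_zero, b.of_coord_comp_eq_one hτ] at this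
  simpa [hcol] using this

variable {n : ℕ} {φ : M →ₗ[R] M}

theorem apply_eq_coord_smul_of_map_eq_id [Fintype ι] (b : Basis ι R M) (hn : 0 < n)
    (hnd : n < Fintype.card ι) (hφ : map n φ = LinearMap.id) (j : ι) :
    φ (b j) = b.coord j (φ (b j)) • b j := by
  classical
  obtain ⟨m, rfl⟩ : ∃ m, n = m + 1 := ⟨n - 1, by omega⟩
  refine b.ext_elem_iff.mpr fun i => ?_
  rcases eq_or_ne i j with rfl | hij
  · simp
  obtain ⟨τ, hτ⟩ := Finset.exists_embedding_fin_forall_notMem {i, j} (k := m)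
    (by grind [Finset.card_le_two])
  simp only [Finset.mem_insert, Finset.mem_singleton, not_or] at hτ
  have hvanish := ιMulti_cons_apply_cons_eq_zero hφ (b j) (b ∘ τ)
  rw [← Fin.comp_cons] at hvanish
  have := b.coord_eq_zero_of_ιMulti_cons_eq_zero
    (Fin.cons_injective_iff.mpr ⟨by simpa using fun q => (hτ q).2, τ.injective⟩)
    (Fin.cases hij.symm fun q => by simpa using (hτ q).1) hvanish
  simpa [Finsupp.single_apply, hij.symm] using this

theorem prod_comp_eq_one_of_map_eq_id {b : Basis ι R M} (hφ : map n φ = LinearMap.id)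
    {a : ι → R} (ha : ∀ j, φ (b j) = a j • b j) {σ : Fin n → ι} (hσ : Function.Injective σ) :
    ∏ q, a (σ q) = 1 := by
  refine b.eq_one_of_smul_ιMulti_comp_eq hσ ?_
  rw [← AlternatingMap.map_smul_univ, ← ιMulti_comp_of_map_eq_id hφ (b ∘ σ)]
  exact congrArg _ (funext fun q => (ha (σ q)).symm)

theorem eq_of_map_eq_id_of_apply_eq_smul [Fintype ι] {b : Basis ι R M} (hn : 0 < n)
    (hnd : n < Fintype.card ι) (hφ : map n φ = LinearMap.id) {a : ι → R}
    (ha : ∀ j, φ (b j) = a j • b j) (i j : ι) : a i = a j := by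
  classical
  obtain ⟨m, rfl⟩ : ∃ m, n = m + 1 := ⟨n - 1, by omega⟩
  rcases eq_or_ne i j with rfl | hij
  · rfl
  obtain ⟨τ, hτ⟩ := Finset.exists_embedding_fin_forall_notMem {i, j} (k := m)
    (by grind [Finset.card_le_two])
  simp only [Finset.mem_insert, Finset.mem_singleton, not_or] at hτ
  have prod_cons_eq_one (k : ι) (hk : ∀ q, τ q ≠ k) : a k * ∏ q, a (τ q) = 1 := by
    simpa [Fin.prod_univ_succ] using prod_comp_eq_one_of_map_eq_id hφ ha
      (Fin.cons_injective_iff.mpr ⟨by simpa using hk, τ.injective⟩)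
  calc a i = a i * (a j * ∏ q, a (τ q)) := by rw [prod_cons_eq_one j fun q => (hτ q).2, mul_one]
    _ = a j * (a i * ∏ q, a (τ q)) := by ring
    _ = a j := by rw [prod_cons_eq_one i fun q => (hτ q).1, mul_one]

theorem exists_pow_eq_one_and_eq_smul_id_of_map_eq_id [Fintype ι] (b : Basis ι R M)
    (hn : 0 < n) (hnd : n < Fintype.card ι) (hφ : map n φ = LinearMap.id) :
    ∃ r : R, r ^ n = 1 ∧ φ = r • LinearMap.id := by
  set a : ι → R := fun j => b.coord j (φ (b j))
  have ha : ∀ j, φ (b j) = a j • b j := b.apply_eq_coord_smul_of_map_eq_id hn hnd hφ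
  obtain ⟨σ⟩ := Embedding.nonempty_of_card_le (α := Fin n) (β := ι) (by simp; omega)
  have ha_eq (j : ι) : a j = a (σ ⟨0, hn⟩) := eq_of_map_eq_id_of_apply_eq_smul hn hnd hφ ha _ _
  refine ⟨a (σ ⟨0, hn⟩), ?_, b.ext fun j => by simp [ha j, ha_eq j]⟩
  calc a (σ ⟨0, hn⟩) ^ n = ∏ q, a (σ q) := by simp [ha_eq]
    _ = 1 := prod_comp_eq_one_of_map_eq_id hφ ha σ.injective

end Module.Basis

open scoped TensorProduct

theorem kernel_exterior_power_mu_general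
    (F : Type) [Field F]
    (V : Type) [AddCommGroup V] [Module F V]
    (n : ℕ) (hn1 : 1 < n) (hnd : n < Module.finrank F V)
    (R : Type) [CommRing R] [Algebra F R]
    (φ : (R ⊗[F] V) ≃ₗ[R] (R ⊗[F] V))
    (hφ : ∀ v : Fin n → R ⊗[F] V,
      (List.ofFn fun i => ExteriorAlgebra.ι R (φ (v i))).prod
        = (List.ofFn fun i => ExteriorAlgebra.ι R (v i)).prod) :
    ∃ r : Rˣ, (r : R) ^ n = 1 ∧ ∀ m : R ⊗[F] V, φ m = (r : R) • m := by
  have : FiniteDimensional F V := Module.finite_of_finrank_pos (by omega)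
  have hφ_wedge : map n (φ : R ⊗[F] V →ₗ[R] R ⊗[F] V) = LinearMap.id := by
    ext v
    simp [ExteriorAlgebra.ιMulti_apply, hφ]
  obtain ⟨r, hr, hφ_eq⟩ := (Algebra.TensorProduct.basis R (Module.finBasis F V))
    |>.exists_pow_eq_one_and_eq_smul_id_of_map_eq_id (by omega) (by simpa using hnd) hφ_wedge
  refine ⟨Units.ofPowEqOne r n hr (by omega), hr, fun m => ?_⟩
  simpa using LinearMap.congr_fun hφ_eq m

/-- Let `V` be an (even) vector space of dimension `d` over a field `F` of
characteristic `≠ 2`, `1 < n < d`, and `R` a commutative unital `F`-algebra.  If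
`φ ∈ GL(V ⊗ R)` induces the identity on `⋀ⁿ(V ⊗ R)` (i.e. `φ(v₁)∧…∧φ(vₙ) = v₁∧…∧vₙ`
for all `v₁,…,vₙ`), then `φ = r·id` for some `r ∈ R^×` with `rⁿ = 1`; hence the kernel of
`GL(V) → GL(⋀ⁿV)` is the group scheme `μₙ` of `n`-th roots of unity. -/
theorem kernel_exterior_power_mu
    (F : Type) [Field F] (hchar : (2 : F) ≠ 0)
    (V : Type) [AddCommGroup V] [Module F V] [FiniteDimensional F V]
    (n : ℕ) (hn1 : 1 < n) (hnd : n < Module.finrank F V)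
    (R : Type) [CommRing R] [Algebra F R]
    (φ : (R ⊗[F] V) ≃ₗ[R] (R ⊗[F] V))
    (hφ : ∀ v : Fin n → R ⊗[F] V,
      (List.ofFn fun i => ExteriorAlgebra.ι R (φ (v i))).prod
        = (List.ofFn fun i => ExteriorAlgebra.ι R (v i)).prod) :
    ∃ r : Rˣ, (r : R) ^ n = 1 ∧ ∀ m : R ⊗[F] V, φ m = (r : R) • m :=
  kernel_exterior_power_mu_general F V n hn1 hnd R φ hφ
end

section
/- Let V, V' be finite-dimensional vector spaces with fixed bases and h: V → V' linear with matrix A. Then the matrix of the induced map h^{∨n}: SymⁿV → SymⁿV' with respect to the bases of monomials indexed by non-decreasing tuples has (I', I)-entry given by the permanental minor per-with-repetitions: Σ_{σ ∈ Sₙ(I')} ∏_{t=1}^n a_{i'_{σ(t)}, i_t}, where Sₙ(I') is a transversal of the stabilizer of I' in Sₙ. -/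
open scoped TensorProduct Classical
open PiTensorProduct

/-! Expanding `h (b i) = ∑ⱼ A j i • b' j` multilinearly writes `⊗ₜ h (b (I t))` as
`∑_J (∏ₜ A (J t) (I t)) • ⊗ₜ b' (J t)` over all tuples `J`. Every `J` is uniquely `I' ∘ τ`
with `I'` non-decreasing (its sorted rearrangement) and `τ` in the transversal `T I'`, and in
the symmetric power `⊗ₜ b' (I' (τ t)) = ⊗ₜ b' (I' t)`, since adjacent transpositions
generate `Sₙ`. -/

namespace PiTensorProduct

theorem tprod_map_basis_eq_sum {R M N ι κ κ' : Type*} [CommSemiring R]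
    [AddCommMonoid M] [Module R M] [AddCommMonoid N] [Module R N]
    [Fintype ι] [DecidableEq ι] [Fintype κ] [Fintype κ'] [DecidableEq κ]
    (b : Module.Basis κ R M) (b' : Module.Basis κ' R N) (h : M →ₗ[R] N) (I : ι → κ) :
    (⨂ₜ[R] t, h (b (I t)))
      = ∑ J : ι → κ', (∏ t, LinearMap.toMatrix b b' h (J t) (I t)) • ⨂ₜ[R] t, b' (J t) := by
  have hcol : ∀ i, h (b i) = ∑ j, LinearMap.toMatrix b b' h j i • b' j := fun i => by
    simp only [LinearMap.toMatrix_apply, b'.sum_repr]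
  simp only [hcol, MultilinearMap.map_sum, MultilinearMap.map_smul_univ]

/-- The quotient by this submodule is `SymⁿM`. -/
def adjSwapRel (R M : Type*) [CommRing R] [AddCommGroup M] [Module R M] (n : ℕ) :
    Submodule R (⨂[R] (_ : Fin n), M) :=
  Submodule.span R
    {t | ∃ (v : Fin n → M) (i : ℕ) (hi : i + 1 < n),
      t = (⨂ₜ[R] k, v k) -
        ⨂ₜ[R] k, v (Equiv.swap (⟨i, Nat.lt_of_succ_lt hi⟩ : Fin n) ⟨i + 1, hi⟩ k)}

theorem adjSwapRel_mkQ_tprod_comp_perm {R M : Type*} [CommRing R] [AddCommGroup M]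
    [Module R M] {n : ℕ} (v : Fin n → M) (σ : Equiv.Perm (Fin n)) :
    (adjSwapRel R M n).mkQ (⨂ₜ[R] k, v (σ k)) = (adjSwapRel R M n).mkQ (⨂ₜ[R] k, v k) := by
  cases n with
  | zero => rw [Subsingleton.elim σ 1]; rfl
  | succ m =>
    have hσ : σ ∈ Submonoid.closure
        (Set.range fun i : Fin m => Equiv.swap i.castSucc i.succ) := by
      rw [Equiv.Perm.mclosure_swap_castSucc_succ]; trivial
    induction hσ using Submonoid.closure_induction generalizing v with
    | mem σ hσ =>
      obtain ⟨i, rfl⟩ := hσ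
      rw [Submodule.mkQ_apply, Submodule.mkQ_apply, eq_comm, Submodule.Quotient.eq]
      exact Submodule.subset_span ⟨v, i.val, by omega, rfl⟩
    | one => rfl
    | mul σ τ _ _ ihσ ihτ => exact (ihτ (v ∘ σ)).trans (ihσ v)

end PiTensorProduct

theorem Tuple.comp_perm_comp_sort_of_monotone {α : Type*} [LinearOrder α] {n : ℕ}
    {f : Fin n → α} (hf : Monotone f) (σ : Equiv.Perm (Fin n)) :
    (f ∘ σ) ∘ Tuple.sort (f ∘ σ) = f := by
  rw [Tuple.comp_perm_comp_sort_eq_comp_sort, Tuple.sort_eq_refl_iff_monotone.2 hf]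
  rfl

theorem Fintype.sum_eq_sum_monotone_sum_transversal {κ M : Type*} [LinearOrder κ]
    [Fintype κ] [AddCommMonoid M] {n : ℕ} (T : (Fin n → κ) → Finset (Equiv.Perm (Fin n)))
    (hT : ∀ I' : Fin n → κ, Monotone I' → ∀ σ : Equiv.Perm (Fin n),
      ∃! τ, τ ∈ T I' ∧ I' ∘ τ = I' ∘ σ)
    (f : (Fin n → κ) → M) :
    ∑ J, f J = ∑ I' ∈ Finset.univ.filter Monotone, ∑ τ ∈ T I', f (I' ∘ τ) := by
  rw [Finset.sum_sigma']
  symm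
  refine Finset.sum_bij (fun p _ => p.1 ∘ p.2) (fun _ _ => Finset.mem_univ _) ?_ ?_
    (fun _ _ => rfl)
  · rintro ⟨I₁, τ₁⟩ h₁ ⟨I₂, τ₂⟩ h₂ (hJ : I₁ ∘ τ₁ = I₂ ∘ τ₂)
    simp only [Finset.mem_sigma, Finset.mem_filter, Finset.mem_univ, true_and] at h₁ h₂
    obtain rfl : I₁ = I₂ := by
      rw [← Tuple.comp_perm_comp_sort_of_monotone h₁.1 τ₁, hJ,
        Tuple.comp_perm_comp_sort_of_monotone h₂.1]
    obtain rfl := (hT I₁ h₁.1 τ₂).unique ⟨h₁.2, hJ⟩ ⟨h₂.2, rfl⟩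
    rfl
  · intro J _
    obtain ⟨τ, ⟨hτ, hτJ⟩, -⟩ :=
      hT (J ∘ Tuple.sort J) (Tuple.monotone_sort J) (Tuple.sort J)⁻¹
    refine ⟨⟨J ∘ Tuple.sort J, τ⟩, ?_, ?_⟩
    · simpa using And.intro (Tuple.monotone_sort J) hτ
    · funext x; simpa using congrFun hτJ x

/-- For `h : V → V'` linear with matrix `A`, the matrix of the induced map
`h^{∨n} : SymⁿV → SymⁿV'` in the bases of monomials indexed by non-decreasing tuples has
`(I', I)`-entry the permanental minor with repetitions
`Σ_{σ ∈ Sₙ(I')} ∏ₜ a_{i'_{σ(t)}, i_t}`, where `Sₙ(I')` is a transversal of the stabilizer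
of `I'` in `Sₙ`.  Here `SymⁿV` is realized as the quotient of `⊗ⁿV` by the symmetrization
relations, with quotient map `mk`. -/
theorem permanental_compound_represents_symmetric_power
    (F : Type) [Field F] (V V' : Type)
    [AddCommGroup V] [Module F V] [AddCommGroup V'] [Module F V']
    (d d' n : ℕ)
    (b : Module.Basis (Fin d) F V) (b' : Module.Basis (Fin d') F V')
    (h : V →ₗ[F] V')
    -- transversals of the stabilizers: T I' contains exactly one representative of each
    -- left coset of Stab(I') in Sₙ
    (T : (Fin n → Fin d') → Finset (Equiv.Perm (Fin n)))
    (hT : ∀ I' : Fin n → Fin d', ∀ σ : Equiv.Perm (Fin n),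
      ∃! τ, τ ∈ T I' ∧ I' ∘ τ = I' ∘ σ) :
    let A := LinearMap.toMatrix b b' h
    let Rel : Submodule F (⨂[F] (_ : Fin n), V') := Submodule.span F
      {t | ∃ (v : Fin n → V') (i : ℕ) (hi : i + 1 < n),
        t = (⨂ₜ[F] k, v k) -
          ⨂ₜ[F] k, v (Equiv.swap (⟨i, by omega⟩ : Fin n) ⟨i + 1, hi⟩ k)}
    ∀ I : Fin n → Fin d, Monotone I →
      Rel.mkQ (⨂ₜ[F] t, h (b (I t)))
        = ∑ I' ∈ Finset.univ.filter (fun I' : Fin n → Fin d' => Monotone I'),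
            (∑ τ ∈ T I', ∏ t : Fin n, A (I' (τ t)) (I t)) •
              Rel.mkQ (⨂ₜ[F] t, b' (I' t)) := by
  intro A Rel I _
  change (adjSwapRel F V' n).mkQ _ = ∑ I' ∈ _, _ • (adjSwapRel F V' n).mkQ _
  rw [tprod_map_basis_eq_sum b b' h I, map_sum,
    Fintype.sum_eq_sum_monotone_sum_transversal T (fun I' _ => hT I')]
  refine Finset.sum_congr rfl fun I' _ => ?_
  rw [Finset.sum_smul]
  refine Finset.sum_congr rfl fun τ _ => ?_
  rw [map_smul, Function.comp_def, adjSwapRel_mkQ_tprod_comp_perm (fun k => b' (I' k)) τ]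
end

section
/- There is a pair of linear maps f^σ: Aₙ(F) → ⋀²M_{1,n}(F), Ê_{ij} ↦ 𝐢·(e_i ∧ e_j) (where 𝐢² = -1 in F), which is an isomorphism of Jordan pairs from V^(II)_n onto the tensor-shift (⋀²V^(I)_{1,n})^{[-4]}, and which is a similarity of the bilinear forms with multiplier -1: ⟨f(x), f(y)⟩ = -t^(II)(x,y). -/
/-!
Send a matrix `x` to `𝐢 ∑_{i<j} x_ij (e_i ∧ e_j)`, i.e. read its entries above the diagonal as
coordinates in the basis `𝐢 (e_i ∧ e_j)`, `i < j`. As `2 ≠ 0`, an antisymmetric matrix is determined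
by these entries, so this is a bijection from `Aₙ(F)`, and it sends `Ê_ij` to `𝐢 (e_i ∧ e_j)`.
The basis `e_i ∧ e_j` is orthonormal for `β`, which gives the multiplier `𝐢² = -1`.
Both sides of the homomorphism identity are trilinear, so it suffices to check it on the `Ê_ij`:
there `Ê_ab Ê_cd Ê_pq + Ê_pq Ê_cd Ê_ab` is a combination of four `Ê`'s, which `f` turns into
`-𝐢` times the first four terms of `{e_a ∧ e_b, e_c ∧ e_d, e_p ∧ e_q}` (as `𝐢³ = -𝐢`), while the
shift by `-4` cancels its last term `4 ⟨e_a ∧ e_b, e_c ∧ e_d⟩ e_p ∧ e_q`.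
-/

open Matrix Finset

section JordanTriple

variable (R A : Type*) [CommSemiring R] [Semiring A] [Algebra R A]

def jordanTriple : A →ₗ[R] A →ₗ[R] A →ₗ[R] A :=
  (LinearMap.mul R A).compr₂ (LinearMap.mul R A) +
    (LinearMap.mul R A).flip.compr₂ (LinearMap.mul R A).flip

variable {R A} in
@[simp]
lemma jordanTriple_apply (x y z : A) : jordanTriple R A x y z = x * y * z + z * y * x := by
  simp [jordanTriple, mul_assoc]

end JordanTriple

section TensorShift

variable {R V : Type*} [CommSemiring R] [AddCommMonoid V] [Module R V]

def tensorShift (T : V →ₗ[R] V →ₗ[R] V →ₗ[R] V) (β : V →ₗ[R] V →ₗ[R] R) (c : R) :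
    V →ₗ[R] V →ₗ[R] V →ₗ[R] V :=
  T + c • β.compr₂ (LinearMap.lsmul R V)

@[simp]
lemma tensorShift_apply (T : V →ₗ[R] V →ₗ[R] V →ₗ[R] V) (β : V →ₗ[R] V →ₗ[R] R) (c : R)
    (x y z : V) : tensorShift T β c x y z = T x y z + (c * β x y) • z := by
  simp [tensorShift, mul_smul]

end TensorShift

section Kronecker

variable {R ι : Type*} [Zero R] [One R] [DecidableEq ι]

def kroneckerDelta (i j : ι) : R := if i = j then 1 else 0

lemma kroneckerDelta_comm (i j : ι) : (kroneckerDelta i j : R) = kroneckerDelta j i := by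
  simp only [kroneckerDelta, eq_comm]

end Kronecker

section AntisymmSingle

variable {R ι : Type*} [CommRing R] [DecidableEq ι]

local notation "δ" => kroneckerDelta (R := R)

def antisymmSingle (i j : ι) : Matrix ι ι R := single i j 1 - single j i 1

lemma antisymmSingle_apply (i j k l : ι) :
    (antisymmSingle i j : Matrix ι ι R) k l = δ i k * δ j l - δ i l * δ j k := by
  simp only [antisymmSingle, Matrix.sub_apply, single_apply, kroneckerDelta]
  grind

lemma antisymmSingle_swap (i j : ι) :
    (antisymmSingle j i : Matrix ι ι R) = -antisymmSingle i j :=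
  (neg_sub _ _).symm

@[simp]
lemma antisymmSingle_self (i : ι) : (antisymmSingle i i : Matrix ι ι R) = 0 :=
  sub_self _

lemma transpose_antisymmSingle (i j : ι) :
    (antisymmSingle i j : Matrix ι ι R)ᵀ = -antisymmSingle i j := by
  simp [antisymmSingle, transpose_single]

lemma single_one_mul_single_one [Fintype ι] (i j k l : ι) :
    (single i j 1 * single k l 1 : Matrix ι ι R) = δ j k • single i l 1 := by
  rcases eq_or_ne j k with rfl | h
  · simp [kroneckerDelta]
  · simp [single_mul_single_of_ne _ _ _ _ h, kroneckerDelta, h]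

lemma jordanTriple_antisymmSingle [Fintype ι] (a b c d p q : ι) :
    jordanTriple R (Matrix ι ι R) (antisymmSingle a b) (antisymmSingle c d) (antisymmSingle p q)
      = (δ b c * δ p d - δ b d * δ p c) • antisymmSingle a q
        + (δ b d * δ q c - δ b c * δ q d) • antisymmSingle a p
        + (δ a d * δ p c - δ a c * δ p d) • antisymmSingle b q
        + (δ a c * δ q d - δ a d * δ q c) • antisymmSingle b p := by
  simp only [jordanTriple_apply, antisymmSingle, sub_mul, mul_sub, single_one_mul_single_one,
    smul_mul_assoc, smul_smul, smul_sub]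
  simp only [kroneckerDelta_comm d, kroneckerDelta_comm c]
  module

lemma map_jordanTriple_antisymmSingle [Fintype ι] {M : Type*} [AddCommGroup M] [Module R M]
    (u : ι → ι → M) (f : Matrix ι ι R →ₗ[R] M) (I : R) (hI : I ^ 2 = -1)
    (hf : ∀ i j, f (antisymmSingle i j) = I • u i j) (β : M →ₗ[R] M →ₗ[R] R)
    (hβ : ∀ i₁ i₂ j₁ j₂, β (u i₁ i₂) (u j₁ j₂) = δ i₁ j₁ * δ i₂ j₂ - δ i₁ j₂ * δ i₂ j₁)
    (T : M →ₗ[R] M →ₗ[R] M →ₗ[R] M)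
    (hT : ∀ i₁ i₂ j₁ j₂ k₁ k₂,
      T (u i₁ i₂) (u j₁ j₂) (u k₁ k₂)
        = (δ i₂ j₁ * δ k₂ j₂ - δ i₂ j₂ * δ k₂ j₁) • u i₁ k₁
          + (δ i₂ j₂ * δ k₁ j₁ - δ i₂ j₁ * δ k₁ j₂) • u i₁ k₂
          + (δ i₁ j₂ * δ k₂ j₁ - δ i₁ j₁ * δ k₂ j₂) • u i₂ k₁
          + (δ i₁ j₁ * δ k₁ j₂ - δ i₁ j₂ * δ k₁ j₁) • u i₂ k₂
          + (4 * (δ i₁ j₁ * δ i₂ j₂ - δ i₂ j₁ * δ i₁ j₂)) • u k₁ k₂)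
    (a b c d p q : ι) :
    f (jordanTriple R _ (antisymmSingle a b) (antisymmSingle c d) (antisymmSingle p q))
      = tensorShift T β (-4) (f (antisymmSingle a b)) (f (antisymmSingle c d))
          (f (antisymmSingle p q)) := by
  have hII (x : R) : I * (I * x) = -x := by linear_combination x * hI
  rw [jordanTriple_antisymmSingle]
  simp only [map_add, map_smul, hf, tensorShift_apply, LinearMap.smul_apply, hT, hβ]
  match_scalars <;> simp only [hII] <;> ring

end AntisymmSingle

abbrev LtPair (ι : Type*) [LT ι] := {p : ι × ι // p.1 < p.2}

section LtPair

variable {R ι : Type*} [LinearOrder ι]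

local notation "δ" => kroneckerDelta (R := R)

lemma kroneckerDelta_det_ltPair [CommRing R] (p q : LtPair ι) :
    δ p.1.1 q.1.1 * δ p.1.2 q.1.2 - δ p.1.1 q.1.2 * δ p.1.2 q.1.1 = if p = q then 1 else 0 := by
  obtain ⟨⟨i, j⟩, hij⟩ := p
  obtain ⟨⟨k, l⟩, hkl⟩ := q
  simp only [kroneckerDelta, Subtype.mk.injEq, Prod.mk.injEq]
  grind

lemma sum_ltPair {M : Type*} [AddCommMonoid M] [Fintype ι] [LocallyFiniteOrderTop ι]
    (g : ι → ι → M) :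
    ∑ p : LtPair ι, g p.1.1 p.1.2 = ∑ i, ∑ j ∈ Ioi i, g i j := by
  rw [← Finset.sum_subtype (univ.filter fun p : ι × ι => p.1 < p.2) (by simp)
    (fun p => g p.1 p.2), Finset.sum_filter, Fintype.sum_prod_type]
  simp only [← Finset.sum_filter, Finset.filter_lt_eq_Ioi]

def upperEntries [Semiring R] : Matrix ι ι R →ₗ[R] LtPair ι → R where
  toFun x p := x p.1.1 p.1.2
  map_add' _ _ := rfl
  map_smul' _ _ := rfl

@[simp]
lemma upperEntries_apply [Semiring R] (x : Matrix ι ι R) (p : LtPair ι) :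
    upperEntries x p = x p.1.1 p.1.2 :=
  rfl

variable [CommRing R]

lemma upperEntries_antisymmSingle (p : LtPair ι) :
    upperEntries (antisymmSingle p.1.1 p.1.2 : Matrix ι ι R)
      = fun q => if p = q then 1 else 0 := by
  ext q
  rw [upperEntries_apply, antisymmSingle_apply, kroneckerDelta_det_ltPair]

lemma eq_zero_of_transpose_eq_neg_of_upperEntries_eq_zero [NoZeroDivisors R] (h2 : (2 : R) ≠ 0)
    {x : Matrix ι ι R} (hx : xᵀ = -x) (hu : upperEntries x = 0) : x = 0 := by
  have skew (i j : ι) : x j i = -x i j := by simpa using congrFun (congrFun hx i) j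
  ext i j
  rcases lt_trichotomy i j with h | rfl | h
  · exact congrFun hu ⟨(i, j), h⟩
  · have : 2 * x i i = 0 := by linear_combination skew i i
    exact (mul_eq_zero.mp this).resolve_left h2
  · rw [skew, Matrix.zero_apply, neg_eq_zero]
    exact congrFun hu ⟨(j, i), h⟩

lemma eq_sum_antisymmSingle [Fintype ι] [NoZeroDivisors R] (h2 : (2 : R) ≠ 0)
    {x : Matrix ι ι R} (hx : xᵀ = -x) :
    x = ∑ p : LtPair ι, upperEntries x p • antisymmSingle p.1.1 p.1.2 := by
  rw [← sub_eq_zero]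
  refine eq_zero_of_transpose_eq_neg_of_upperEntries_eq_zero h2 ?_ ?_
  · rw [transpose_sub, transpose_sum, hx]
    simp only [transpose_smul, transpose_antisymmSingle, smul_neg, Finset.sum_neg_distrib]
    abel
  · rw [map_sub, map_sum]
    simp only [map_smul, upperEntries_antisymmSingle, ← pi_eq_sum_univ, sub_self]

variable [Fintype ι] {M : Type*} [AddCommGroup M] [Module R M]

noncomputable def upperMap (b : Module.Basis (LtPair ι) R M) : Matrix ι ι R →ₗ[R] M :=
  b.equivFun.symm ∘ₗ upperEntries

lemma upperMap_apply (b : Module.Basis (LtPair ι) R M) (x : Matrix ι ι R) :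
    upperMap b x = ∑ p, x p.1.1 p.1.2 • b p := by
  simp [upperMap]

lemma upperMap_antisymmSingle_ltPair (b : Module.Basis (LtPair ι) R M) (p : LtPair ι) :
    upperMap b (antisymmSingle p.1.1 p.1.2) = b p := by
  simp [upperMap, upperEntries_antisymmSingle]

lemma repr_upperMap (b : Module.Basis (LtPair ι) R M) (x : Matrix ι ι R) (p : LtPair ι) :
    b.repr (upperMap b x) p = x p.1.1 p.1.2 := by
  change b.equivFun (b.equivFun.symm (upperEntries x)) p = _
  rw [LinearEquiv.apply_symm_apply, upperEntries_apply]

lemma upperMap_antisymmSingle {V : Type*} [AddCommGroup V] [Module R V]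
    (b : Module.Basis (LtPair ι) R M) (w : V →ₗ[R] V →ₗ[R] M) (hw : ∀ v, w v v = 0) (e : ι → V)
    (hb : ∀ p, b p = w (e p.1.1) (e p.1.2)) (i j : ι) :
    upperMap b (antisymmSingle i j) = w (e i) (e j) := by
  rcases lt_trichotomy i j with h | rfl | h
  · exact (upperMap_antisymmSingle_ltPair b ⟨(i, j), h⟩).trans (hb _)
  · simp [hw]
  · have hswap : w (e i + e j) (e i + e j) = 0 := hw _
    simp only [map_add, LinearMap.add_apply, hw, zero_add, add_zero] at hswap
    rw [antisymmSingle_swap, map_neg, upperMap_antisymmSingle_ltPair b ⟨(j, i), h⟩, hb]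
    exact neg_eq_of_add_eq_zero_right hswap

lemma existsUnique_upperMap_eq [NoZeroDivisors R] (h2 : (2 : R) ≠ 0)
    (b : Module.Basis (LtPair ι) R M) (y : M) :
    ∃! x : Matrix ι ι R, xᵀ = -x ∧ upperMap b x = y := by
  refine ⟨∑ p, b.repr y p • antisymmSingle p.1.1 p.1.2, ⟨?_, ?_⟩, ?_⟩
  · simp [transpose_sum, transpose_antisymmSingle]
  · simp [upperMap_antisymmSingle_ltPair]
  · rintro x ⟨hx, rfl⟩
    simpa [repr_upperMap] using eq_sum_antisymmSingle h2 hx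

lemma bilin_upperMap_of_orthogonal (b : Module.Basis (LtPair ι) R M) (β : M →ₗ[R] M →ₗ[R] R) (c : R)
    (hβ : ∀ p q, β (b p) (b q) = if p = q then c else 0) (x y : Matrix ι ι R) :
    β (upperMap b x) (upperMap b y) = c * ∑ p : LtPair ι, x p.1.1 p.1.2 * y p.1.1 p.1.2 := by
  simp only [upperMap_apply, map_sum, map_smul, LinearMap.sum_apply, LinearMap.smul_apply, hβ,
    smul_eq_mul, mul_ite, mul_zero, Finset.sum_ite_eq', Finset.mem_univ, if_true, Finset.mul_sum]
  exact Finset.sum_congr rfl fun p _ => by ring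

lemma map_jordanTriple_eq_of_antisymmSingle [NoZeroDivisors R] (h2 : (2 : R) ≠ 0)
    (f : Matrix ι ι R →ₗ[R] M) (S : M →ₗ[R] M →ₗ[R] M →ₗ[R] M)
    (h : ∀ a b c d p q : ι,
      f (jordanTriple R _ (antisymmSingle a b) (antisymmSingle c d) (antisymmSingle p q))
        = S (f (antisymmSingle a b)) (f (antisymmSingle c d)) (f (antisymmSingle p q)))
    {x y z : Matrix ι ι R} (hx : xᵀ = -x) (hy : yᵀ = -y) (hz : zᵀ = -z) :
    f (jordanTriple R _ x y z) = S (f x) (f y) (f z) := by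
  let Φ := (jordanTriple R (Matrix ι ι R)).compr₂ (LinearMap.llcomp R _ _ _ f)
  let Ψ := (S.compl₁₂ f f).compr₂ (LinearMap.lcomp R M f)
  have hΦ (x y z : Matrix ι ι R) : Φ x y z = f (jordanTriple R _ x y z) := rfl
  have hΨ (x y z : Matrix ι ι R) : Ψ x y z = S (f x) (f y) (f z) := rfl
  rw [← hΦ, ← hΨ, eq_sum_antisymmSingle h2 hx, eq_sum_antisymmSingle h2 hy,
    eq_sum_antisymmSingle h2 hz]
  simp only [map_sum, map_smul, LinearMap.sum_apply, LinearMap.smul_apply, hΦ, hΨ, h]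

end LtPair

/-- The pair of linear maps `f^σ : Aₙ(F) → ⋀²M_{1,n}(F)`,
`Ê_{ij} ↦ 𝐢·(eᵢ ∧ eⱼ)` (with `𝐢² = -1`) is an isomorphism of Jordan pairs from
`V^(II)_n` onto the tensor-shift `(⋀²V^(I)_{1,n})^{[-4]}` and a similarity of the bilinear
forms with multiplier `-1`: `⟨f(x), f(y)⟩ = -t^(II)(x,y)`.  Here `Λ` together with the
wedge map `w` is the exterior square of `M_{1,n}(F)` (pinned down by a basis hypothesis),
`β` its induced bilinear form (determinant minors) and `T` the triple product of
`⋀²V^(I)_{1,n}` obtained from the Faulkner construction, given on generators. -/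
theorem type_II_is_shifted_alternating_square
    (F : Type) [Field F] (hchar : (2 : F) ≠ 0) (n : ℕ)
    (I : F) (hI : I ^ 2 = -1)
    (Λ : Type) [AddCommGroup Λ] [Module F Λ]
    (w : Matrix (Fin 1) (Fin n) F →ₗ[F] Matrix (Fin 1) (Fin n) F →ₗ[F] Λ)
    (hw : ∀ x, w x x = 0) :
    let e : Fin n → Matrix (Fin 1) (Fin n) F := fun i => Matrix.single 0 i 1
    let δ : Fin n → Fin n → F := fun i j => if i = j then 1 else 0
    let Ehat : Fin n → Fin n → Matrix (Fin n) (Fin n) F := fun i j =>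
      Matrix.single i j 1 - Matrix.single j i 1
    ∀ (hbasis : ∃ bΛ : Module.Basis {p : Fin n × Fin n // p.1 < p.2} F Λ,
      ∀ p : {p : Fin n × Fin n // p.1 < p.2}, bΛ p = w (e p.1.1) (e p.1.2))
    -- the bilinear form of ⋀²V^(I)_{1,n}
    (β : Λ →ₗ[F] Λ →ₗ[F] F)
    (hβ : ∀ i₁ i₂ j₁ j₂ : Fin n,
      β (w (e i₁) (e i₂)) (w (e j₁) (e j₂)) = δ i₁ j₁ * δ i₂ j₂ - δ i₁ j₂ * δ i₂ j₁)
    -- the triple product of ⋀²V^(I)_{1,n} (same on both halves of the pair)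
    (T : Λ →ₗ[F] Λ →ₗ[F] Λ →ₗ[F] Λ)
    (hT : ∀ i₁ i₂ j₁ j₂ k₁ k₂ : Fin n,
      T (w (e i₁) (e i₂)) (w (e j₁) (e j₂)) (w (e k₁) (e k₂))
        = (δ i₂ j₁ * δ k₂ j₂ - δ i₂ j₂ * δ k₂ j₁) • w (e i₁) (e k₁)
          + (δ i₂ j₂ * δ k₁ j₁ - δ i₂ j₁ * δ k₁ j₂) • w (e i₁) (e k₂)
          + (δ i₁ j₂ * δ k₂ j₁ - δ i₁ j₁ * δ k₂ j₂) • w (e i₂) (e k₁)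
          + (δ i₁ j₁ * δ k₁ j₂ - δ i₁ j₂ * δ k₁ j₁) • w (e i₂) (e k₂)
          + (4 * (δ i₁ j₁ * δ i₂ j₂ - δ i₂ j₁ * δ i₁ j₂)) • w (e k₁) (e k₂)),
    ∃ f : Matrix (Fin n) (Fin n) F →ₗ[F] Λ,
      -- f(Ê_{ij}) = 𝐢·(eᵢ ∧ eⱼ)
      (∀ i j : Fin n, f (Ehat i j) = I • w (e i) (e j)) ∧
      -- f is a bijection from the antisymmetric matrices onto ⋀²M_{1,n}(F)
      (∀ y : Λ, ∃! x : Matrix (Fin n) (Fin n) F, x.transpose = -x ∧ f x = y) ∧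
      -- f is a homomorphism onto the (-4)-tensor-shifted triple product; here the
      -- triple product of V^(II)_n is `{x,y,z} = xyz + zyx` (as in the paper's
      -- computation: for antisymmetric matrices `yᵀ = -y`, and the middle factor is
      -- taken untransposed)
      (∀ x y z : Matrix (Fin n) (Fin n) F,
        x.transpose = -x → y.transpose = -y → z.transpose = -z →
        f (x * y * z + z * y * x)
          = T (f x) (f y) (f z) + ((-4 : F) * β (f x) (f y)) • f z) ∧
      -- f is a similarity of the bilinear forms with multiplier -1
      (∀ x y : Matrix (Fin n) (Fin n) F,
        x.transpose = -x → y.transpose = -y →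
        β (f x) (f y) = -∑ i : Fin n, ∑ j ∈ Finset.Ioi i, x i j * y i j) := by
  intro e δ Ehat hbasis β hβ T hT
  obtain ⟨b, hb⟩ := hbasis
  have hIunit : IsUnit I := Ne.isUnit <| by rintro rfl; norm_num at hI
  set b' := b.isUnitSMul fun _ => hIunit
  have hf : ∀ i j, upperMap b' (Ehat i j) = I • w (e i) (e j) :=
    upperMap_antisymmSingle b' (I • w) (by simp [hw]) e fun p => by
      simp [b', Module.Basis.isUnitSMul_apply, hb]
  have hβb : ∀ p q, β (b' p) (b' q) = if p = q then -1 else 0 := by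
    intro p q
    have hdet := kroneckerDelta_det_ltPair (R := F) p q
    simp only [kroneckerDelta] at hdet
    simp only [b', Module.Basis.isUnitSMul_apply, map_smul, LinearMap.smul_apply, hb, hβ, δ, hdet]
    rw [smul_smul, ← sq, hI]
    split_ifs <;> simp
  refine ⟨upperMap b', hf, existsUnique_upperMap_eq hchar b', fun x y z hx hy hz => ?_,
    fun x y _ _ => ?_⟩
  · simpa only [jordanTriple_apply, tensorShift_apply] using
      map_jordanTriple_eq_of_antisymmSingle hchar _ _
        (map_jordanTriple_antisymmSingle (fun i j => w (e i) (e j)) _ I hI hf β hβ T hT) hx hy hz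
  · rw [bilin_upperMap_of_orthogonal b' β (-1) hβb, sum_ltPair fun i j => x i j * y i j,
      neg_one_mul]
end
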